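/- For every γ ∈ (0,1) there exist c = c(γ) > 0, L = L(γ) and K = K(γ) such that every 2-edge-coloured graph G on n ≥ K vertices with red minimum degree and blue minimum degree both at least γn contains at least c·n^ℓ copies of a colour-alternating cycle of some fixed even length ℓ with 4 ≤ ℓ ≤ L. -/

import Mathlib

/-!
Put `β = γ² / 4` and join `u → w` in an auxiliary digraph when `u ≠ w` and at least `2βn`
vertices `v` have `uv` red and `vw` blue. Double counting red–blue paths from `u` shows that
every vertex has at least `βn` out-neighbours. Hence, for `s` large in terms of `β`, at least half
of all `s`-tuples of vertices contain an out-neighbour of each of their entries; every such tuple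
contains a directed cycle of some length `2 ≤ t ≤ s`, and pigeonholing over `t` gives `≳ n^t`
directed `t`-cycles. A directed cycle `c₀ → c₁ → ⋯ → c₀` extends to `≳ (βn)^t` alternating cycles
`c₀ v₀ c₁ v₁ ⋯` of length `2t`, by choosing distinct vertices `vⱼ`, red to `cⱼ` and blue to
`cⱼ₊₁`.
-/

/-- The cyclic successor on `Fin ℓ`. -/
def cyc {ℓ : ℕ} (i : Fin ℓ) : Fin ℓ := ⟨(i.val + 1) % ℓ, Nat.mod_lt _ i.pos⟩

open Finset Function

section FunctionCounting

variable {ι α : Type*} [Fintype ι] [DecidableEq ι] [Fintype α] [DecidableEq α]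

lemma card_filter_comp_eq_le {κ : Type*} [Fintype κ] {σ : κ → ι} (hσ : Injective σ)
    (F : κ → α) :
    #{g : ι → α | ∀ k, g (σ k) = F k} ≤
      Fintype.card α ^ (Fintype.card ι - Fintype.card κ) := by
  have hcard : Fintype.card {j // j ∉ Set.range σ} = Fintype.card ι - Fintype.card κ := by
    rw [Fintype.card_subtype_compl, Set.card_range_of_injective hσ]
  calc _ ≤ #(univ : Finset ({j // j ∉ Set.range σ} → α)) := by
        refine card_le_card_of_injOn (fun g j => g j) (fun _ _ => mem_coe.2 (mem_univ _)) ?_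
        intro g hg g' hg' h
        simp only [coe_filter, mem_univ, true_and, Set.mem_ofPred_eq] at hg hg'
        funext j
        by_cases hj : j ∈ Set.range σ
        · obtain ⟨k, rfl⟩ := hj
          rw [hg k, hg' k]
        · exact congrFun h ⟨j, hj⟩
    _ = _ := by rw [card_univ, Fintype.card_fun, hcard]

lemma card_filter_apply_eq_apply_le {a b : ι} (hab : a ≠ b) :
    #{v : ι → α | v a = v b} ≤ Fintype.card α ^ (Fintype.card ι - 1) := by
  have hcard : Fintype.card {j // j ≠ b} = Fintype.card ι - 1 := by
    rw [Fintype.card_subtype_compl, Fintype.card_subtype_eq]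
  calc _ ≤ #(univ : Finset ({j // j ≠ b} → α)) := by
        refine card_le_card_of_injOn (fun v j => v j) (fun _ _ => mem_coe.2 (mem_univ _)) ?_
        intro v hv v' hv' h
        simp only [coe_filter, mem_univ, true_and, Set.mem_ofPred_eq] at hv hv'
        funext j
        by_cases hj : j = b
        · subst hj
          rw [← hv, ← hv']
          exact congrFun h ⟨a, hab⟩
        · exact congrFun h ⟨j, hj⟩
    _ = _ := by rw [card_univ, Fintype.card_fun, hcard]

lemma card_filter_not_injective_le :
    #{v : ι → α | ¬ Injective v} ≤
      Fintype.card ι ^ 2 * Fintype.card α ^ (Fintype.card ι - 1) := by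
  have hsub : ({v : ι → α | ¬ Injective v} : Finset _) ⊆
      (univ : Finset ι).offDiag.biUnion fun p => {v : ι → α | v p.1 = v p.2} := by
    intro v hv
    simp only [Injective, mem_filter, mem_univ, true_and, not_forall] at hv
    obtain ⟨a, b, hab, hne⟩ := hv
    exact mem_biUnion.2 ⟨(a, b), by simpa using hne, by simpa using hab⟩
  calc _ ≤ ∑ p ∈ (univ : Finset ι).offDiag, #{v : ι → α | v p.1 = v p.2} :=
        (card_le_card hsub).trans card_biUnion_le
    _ ≤ ∑ _p ∈ (univ : Finset ι).offDiag, Fintype.card α ^ (Fintype.card ι - 1) :=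
        sum_le_sum fun p hp => card_filter_apply_eq_apply_le (mem_offDiag.1 hp).2.2
    _ ≤ _ := by
        rw [sum_const, smul_eq_mul, offDiag_card, card_univ, sq]
        exact Nat.mul_le_mul_right _ (Nat.sub_le _ _)

lemma pow_sub_le_card_filter_injective_piFinset (A : ι → Finset α) {m : ℝ} (hm : 0 ≤ m)
    (hA : ∀ j, m ≤ #(A j)) :
    m ^ Fintype.card ι - Fintype.card ι ^ 2 * Fintype.card α ^ (Fintype.card ι - 1) ≤
      #{v ∈ Fintype.piFinset A | Injective v} := by
  have hprod : m ^ Fintype.card ι ≤ #(Fintype.piFinset A) := by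
    rw [Fintype.card_piFinset, Nat.cast_prod, ← card_univ, ← prod_const]
    exact prod_le_prod (fun _ _ => hm) fun j _ => hA j
  have hnot : #{v ∈ Fintype.piFinset A | ¬ Injective v} ≤
      Fintype.card ι ^ 2 * Fintype.card α ^ (Fintype.card ι - 1) :=
    (card_le_card (filter_subset_filter _ (subset_univ _))).trans card_filter_not_injective_le
  have hsplit := card_filter_add_card_filter_not (s := Fintype.piFinset A) (p := Injective)
  rify at hnot hsplit
  linarith

lemma card_filter_range_subset_range_le {t : ℕ} {F : Fin t → α} (hF : Injective F) :
    #{g : ι → α | ∀ k, ∃ i, g i = F k} ≤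
      Fintype.card ι ^ t * Fintype.card α ^ (Fintype.card ι - t) := by
  have hsub : ({g : ι → α | ∀ k, ∃ i, g i = F k} : Finset _) ⊆
      ({σ : Fin t → ι | Injective σ} : Finset _).biUnion
        fun σ => {g : ι → α | ∀ k, g (σ k) = F k} := by
    intro g hg
    simp only [mem_filter, mem_univ, true_and] at hg
    choose σ hσ using hg
    refine mem_biUnion.2 ⟨σ, mem_filter.2 ⟨mem_univ _, fun k k' h => hF ?_⟩,
      mem_filter.2 ⟨mem_univ _, hσ⟩⟩
    rw [← hσ k, ← hσ k', h]
  calc _ ≤ ∑ σ ∈ ({σ : Fin t → ι | Injective σ} : Finset _),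
        #{g : ι → α | ∀ k, g (σ k) = F k} := (card_le_card hsub).trans card_biUnion_le
    _ ≤ ∑ _σ ∈ ({σ : Fin t → ι | Injective σ} : Finset _),
        Fintype.card α ^ (Fintype.card ι - t) := by
        refine sum_le_sum fun σ hσ => ?_
        have := card_filter_comp_eq_le (mem_filter.1 hσ).2 F
        rw [Fintype.card_fin] at this
        exact (card_le_card fun g hg => by simpa using hg).trans this
    _ ≤ _ := by
        rw [sum_const, smul_eq_mul]
        refine Nat.mul_le_mul_right _ ((card_le_univ _).trans ?_)
        simp

lemma card_filter_exists_forall_not_le (D : α → α → Prop) [DecidableRel D] {e : ℝ}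
    (he : ∀ u, #{w | ¬ D u w} ≤ e) :
    #{g : ι → α | ∃ i, ∀ j, ¬ D (g i) (g j)} ≤
      Fintype.card ι * (Fintype.card α * e ^ (Fintype.card ι - 1)) := by
  set P : ι → α → Finset (ι → α) := fun i u =>
    Fintype.piFinset fun j => if j = i then {u} else ({w | ¬ D u w} : Finset α)
  have hsub : ({g : ι → α | ∃ i, ∀ j, ¬ D (g i) (g j)} : Finset _) ⊆
      univ.biUnion fun i => univ.biUnion fun u => P i u := by
    intro g hg
    obtain ⟨i, hi⟩ := (mem_filter.1 hg).2
    refine mem_biUnion.2 ⟨i, mem_univ _, mem_biUnion.2 ⟨g i, mem_univ _, ?_⟩⟩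
    refine Fintype.mem_piFinset.2 fun j => ?_
    split_ifs with hj
    · simp [hj]
    · simpa using hi j
  have hP : ∀ i u, (#(P i u) : ℝ) ≤ e ^ (Fintype.card ι - 1) := by
    intro i u
    have hcard : #(P i u) = #{w | ¬ D u w} ^ (Fintype.card ι - 1) := by
      simp only [P, Fintype.card_piFinset, apply_ite card, card_singleton, prod_ite, prod_const_one,
        one_mul, prod_const, filter_ne', card_erase_of_mem (mem_univ _), card_univ]
    rw [hcard, Nat.cast_pow]
    exact pow_le_pow_left₀ (Nat.cast_nonneg _) (he u) _
  calc (#{g : ι → α | ∃ i, ∀ j, ¬ D (g i) (g j)} : ℝ)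
      ≤ ∑ i : ι, ∑ u : α, (#(P i u) : ℝ) := by
        exact_mod_cast (card_le_card hsub).trans
          (card_biUnion_le.trans (sum_le_sum fun i _ => card_biUnion_le))
    _ ≤ ∑ _i : ι, ∑ _u : α, e ^ (Fintype.card ι - 1) :=
        sum_le_sum fun i _ => sum_le_sum fun u _ => hP i u
    _ = _ := by simp

lemma pow_le_two_mul_card_forall_exists {D : α → α → Prop} [DecidableRel D] {e : ℝ}
    (he : ∀ u, #{w | ¬ D u w} ≤ e)
    (hbad : Fintype.card ι * (Fintype.card α * e ^ (Fintype.card ι - 1)) ≤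
      (Fintype.card α : ℝ) ^ Fintype.card ι / 2) :
    Fintype.card α ^ Fintype.card ι ≤ 2 * #{g : ι → α | ∀ i, ∃ j, D (g i) (g j)} := by
  have hsplit := card_filter_add_card_filter_not (s := (univ : Finset (ι → α)))
    (p := fun g => ∀ i, ∃ j, D (g i) (g j))
  rw [card_univ, Fintype.card_fun] at hsplit
  have hsub : #{g : ι → α | ¬ ∀ i, ∃ j, D (g i) (g j)} ≤
      #{g : ι → α | ∃ i, ∀ j, ¬ D (g i) (g j)} :=
    card_le_card fun g hg => by simpa using hg
  have := card_filter_exists_forall_not_le (ι := ι) D he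
  rify at hsplit hsub ⊢
  linarith

end FunctionCounting

lemma Function.exists_mem_periodicPts {β : Type*} [Finite β] [Nonempty β] (f : β → β) :
    ∃ x, x ∈ periodicPts f := by
  obtain ⟨x₀⟩ := ‹Nonempty β›
  obtain ⟨m, k, heq, hne⟩ : ∃ m k, f^[m] x₀ = f^[k] x₀ ∧ m ≠ k := by
    simpa [Injective] using not_injective_infinite_finite (f^[·] x₀)
  wlog hmk : m < k generalizing m k
  · exact this k m heq.symm hne.symm (by omega)
  refine ⟨f^[m] x₀, mk_mem_periodicPts (n := k - m) (by omega) ?_⟩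
  rw [IsPeriodicPt, IsFixedPt, ← iterate_add_apply, Nat.sub_add_cancel hmk.le, heq]

section DirectedCycles

variable {α : Type*} (D : α → α → Prop)

def IsDirCycle {t : ℕ} (F : Fin t → α) : Prop :=
  Injective F ∧ ∀ k, D (F k) (F (cyc k))

instance [DecidableEq α] [DecidableRel D] {t : ℕ} :
    DecidablePred (IsDirCycle D (t := t)) :=
  fun _ => inferInstanceAs (Decidable (_ ∧ _))

variable {D} [DecidableEq α]

lemma exists_isDirCycle_of_forall_exists {ι : Type*} [Fintype ι] [Nonempty ι]
    (hD : ∀ x, ¬ D x x) (g : ι → α) (hg : ∀ i, ∃ j, D (g i) (g j)) :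
    ∃ t, 2 ≤ t ∧ t ≤ Fintype.card ι ∧
      ∃ F : Fin t → α, IsDirCycle D F ∧ ∀ k, ∃ i, g i = F k := by
  have hstep : ∀ x : Set.range g, ∃ y : Set.range g, D x y := by
    rintro ⟨_, i, rfl⟩
    obtain ⟨j, hj⟩ := hg i
    exact ⟨⟨g j, j, rfl⟩, hj⟩
  choose H hH using hstep
  have : Nonempty (Set.range g) := ⟨⟨g (Classical.arbitrary ι), _, rfl⟩⟩
  obtain ⟨x, hx⟩ := exists_mem_periodicPts H
  have hp1 : minimalPeriod H x ≠ 1 := fun h => by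
    have hD' := hH x
    rw [minimalPeriod_eq_one_iff_isFixedPt.1 h] at hD'
    exact hD _ hD'
  refine ⟨minimalPeriod H x, ?_, minimalPeriod_le_card.trans (Fintype.card_range_le g),
    fun k => H^[k] x, ⟨fun k k' h => Fin.ext ?_, fun k => ?_⟩, fun k => (H^[k] x).2⟩
  · have := minimalPeriod_pos_of_mem_periodicPts hx
    omega
  · exact iterate_injOn_Iio_minimalPeriod k.2 k'.2 (Subtype.val_injective h)
  · simp only [cyc, iterate_mod_minimalPeriod_eq, iterate_succ_apply']
    exact hH _

lemma exists_pow_le_card_isDirCycle [Fintype α] [DecidableRel D] {ι : Type*} [Fintype ι]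
    [DecidableEq ι] (hD : ∀ x, ¬ D x x) (hι : 2 ≤ Fintype.card ι)
    (hgood : Fintype.card α ^ Fintype.card ι ≤ 2 * #{g : ι → α | ∀ i, ∃ j, D (g i) (g j)}) :
    ∃ t, 2 ≤ t ∧ t ≤ Fintype.card ι ∧
      Fintype.card α ^ t ≤ 2 * Fintype.card ι ^ (t + 1) * #{F : Fin t → α | IsDirCycle D F} := by
  set n := Fintype.card α
  set s := Fintype.card ι
  set Cyc := fun t => (univ.filter fun F : Fin t → α => IsDirCycle D F)
  have : Nonempty ι := Fintype.card_pos_iff.1 (by omega)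
  have hcover : #{g : ι → α | ∀ i, ∃ j, D (g i) (g j)} ≤
      ∑ t ∈ Icc 2 s, #(Cyc t) * (s ^ t * n ^ (s - t)) := by
    calc _ ≤ #((Icc 2 s).biUnion fun t => (Cyc t).biUnion fun F =>
          ({g : ι → α | ∀ k, ∃ i, g i = F k} : Finset _)) := by
          refine card_le_card fun g hg => ?_
          obtain ⟨t, ht2, hts, F, hF, hFg⟩ :=
            exists_isDirCycle_of_forall_exists hD g (mem_filter.1 hg).2
          simp only [mem_biUnion, mem_Icc, mem_filter, mem_univ, true_and, Cyc]
          exact ⟨t, ⟨ht2, hts⟩, F, hF, hFg⟩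
      _ ≤ ∑ t ∈ Icc 2 s, ∑ F ∈ Cyc t, #{g : ι → α | ∀ k, ∃ i, g i = F k} :=
          card_biUnion_le.trans (sum_le_sum fun t _ => card_biUnion_le)
      _ ≤ _ := by
          refine sum_le_sum fun t _ => ?_
          rw [← smul_eq_mul, ← sum_const]
          exact sum_le_sum fun F hF => card_filter_range_subset_range_le (mem_filter.1 hF).2.1
  obtain ⟨t, ht, hle⟩ := exists_le_of_sum_le (f := fun _ => n ^ s)
    (g := fun t => 2 * s * (#(Cyc t) * (s ^ t * n ^ (s - t)))) (nonempty_Icc.2 hι) (by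
      rw [← mul_sum, sum_const, Nat.card_Icc, smul_eq_mul]
      calc (s + 1 - 2) * n ^ s ≤ s * (2 * #{g : ι → α | ∀ i, ∃ j, D (g i) (g j)}) :=
            Nat.mul_le_mul (by omega) hgood
        _ ≤ _ := by rw [mul_left_comm, mul_assoc]; gcongr)
  obtain ⟨ht2, hts⟩ := mem_Icc.1 ht
  refine ⟨t, ht2, hts, ?_⟩
  rcases Nat.eq_zero_or_pos n with hn | hn
  · simp [hn, show t ≠ 0 by omega]
  refine Nat.le_of_mul_le_mul_right ?_ (pow_pos hn (s - t))
  calc n ^ t * n ^ (s - t) = n ^ s := by rw [← pow_add, Nat.add_sub_cancel' hts]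
    _ ≤ _ := hle
    _ = _ := by ring

end DirectedCycles

section Codegree

variable {α : Type*} [Fintype α] [DecidableEq α] (G₁ G₂ : SimpleGraph α)
  [DecidableRel G₁.Adj] [DecidableRel G₂.Adj]

def altCodegree (u w : α) : ℕ := #(G₁.neighborFinset u ∩ G₂.neighborFinset w)

lemma sum_altCodegree (u : α) :
    ∑ w, altCodegree G₁ G₂ u w = ∑ v ∈ G₁.neighborFinset u, G₂.degree v := by
  simp only [altCodegree, ← filter_mem_eq_inter, SimpleGraph.mem_neighborFinset]
  simp_rw [← G₂.card_neighborFinset_eq_degree, G₂.neighborFinset_eq_filter]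
  refine (sum_card_bipartiteAbove_eq_sum_card_bipartiteBelow G₂.Adj).trans (sum_congr rfl ?_)
  simp [bipartiteBelow, G₂.adj_comm]

def altCodegreeRel (θ : ℝ) (u w : α) : Prop := u ≠ w ∧ θ ≤ altCodegree G₁ G₂ u w

noncomputable instance (θ : ℝ) : DecidableRel (altCodegreeRel G₁ G₂ θ) :=
  fun _ _ => inferInstanceAs (Decidable (_ ∧ _))

variable {G₁ G₂}

lemma mul_le_card_mul_card_filter_le_altCodegree_add {a b θ : ℝ} (hb0 : 0 ≤ b) (hθ : 0 ≤ θ)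
    (ha : ∀ v, a ≤ G₁.degree v) (hb : ∀ v, b ≤ G₂.degree v) (u : α) :
    a * b ≤ Fintype.card α * (#{w | θ ≤ altCodegree G₁ G₂ u w} + θ) := by
  set n := Fintype.card α
  have hlow : a * b ≤ ∑ w, (altCodegree G₁ G₂ u w : ℝ) := by
    calc a * b ≤ G₁.degree u * b := mul_le_mul_of_nonneg_right (ha u) hb0
      _ ≤ ∑ v ∈ G₁.neighborFinset u, (G₂.degree v : ℝ) := by
          rw [← G₁.card_neighborFinset_eq_degree, ← nsmul_eq_mul]
          exact card_nsmul_le_sum _ _ _ fun v _ => hb v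
      _ = _ := by exact_mod_cast (sum_altCodegree G₁ G₂ u).symm
  have hbig : ∀ w, (altCodegree G₁ G₂ u w : ℝ) ≤ n := fun w => by
    exact_mod_cast card_le_univ _
  have hsmall : ∑ w with ¬ θ ≤ altCodegree G₁ G₂ u w, (altCodegree G₁ G₂ u w : ℝ) ≤ n * θ := by
    calc _ ≤ ∑ w with ¬ θ ≤ altCodegree G₁ G₂ u w, θ :=
          sum_le_sum fun w hw => (not_le.1 (mem_filter.1 hw).2).le
      _ ≤ n * θ := by
          rw [sum_const, nsmul_eq_mul]
          exact mul_le_mul_of_nonneg_right (by exact_mod_cast card_le_univ _) hθ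
  calc a * b ≤ ∑ w, (altCodegree G₁ G₂ u w : ℝ) := hlow
    _ = ∑ w with θ ≤ altCodegree G₁ G₂ u w, (altCodegree G₁ G₂ u w : ℝ) +
        ∑ w with ¬ θ ≤ altCodegree G₁ G₂ u w, (altCodegree G₁ G₂ u w : ℝ) :=
        (sum_filter_add_sum_filter_not _ _ _).symm
    _ ≤ #{w | θ ≤ altCodegree G₁ G₂ u w} * n + n * θ := by
        gcongr
        rw [← nsmul_eq_mul]
        exact sum_le_card_nsmul _ _ _ fun w _ => hbig w
    _ = _ := by ring

lemma card_filter_not_altCodegreeRel_add_le (θ : ℝ) (u : α) :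
    #{w | ¬ altCodegreeRel G₁ G₂ θ u w} + #{w | θ ≤ altCodegree G₁ G₂ u w} ≤
      Fintype.card α + 1 := by
  have hsub : ({w | ¬ altCodegreeRel G₁ G₂ θ u w} : Finset α) ⊆
      insert u ({w | ¬ θ ≤ altCodegree G₁ G₂ u w} : Finset α) := by
    intro w hw
    simp only [altCodegreeRel, mem_filter, mem_univ, true_and, not_and_or, not_not] at hw
    rcases hw with rfl | hw
    · exact mem_insert_self _ _
    · exact mem_insert_of_mem (by simpa using hw)
  have hsplit := card_filter_add_card_filter_not (s := univ)
    (p := fun w => θ ≤ altCodegree G₁ G₂ u w)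
  rw [card_univ] at hsplit
  have := (card_le_card hsub).trans (card_insert_le _ _)
  omega

lemma card_filter_not_altCodegreeRel_le {γ : ℝ} (hγ : 0 ≤ γ)
    (h₁ : ∀ v, γ * Fintype.card α ≤ G₁.degree v) (h₂ : ∀ v, γ * Fintype.card α ≤ G₂.degree v)
    (u : α) :
    (#{w | ¬ altCodegreeRel G₁ G₂ (γ ^ 2 * Fintype.card α / 2) u w} : ℝ) ≤
      Fintype.card α + 1 - γ ^ 2 * Fintype.card α / 2 := by
  have hmul := mul_le_card_mul_card_filter_le_altCodegree_add
    (θ := γ ^ 2 * Fintype.card α / 2) (by positivity) (by positivity) h₁ h₂ u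
  set n := Fintype.card α
  have hn : (0 : ℝ) < n := by exact_mod_cast Fintype.card_pos_iff.2 ⟨u⟩
  have hbig : γ ^ 2 * n / 2 ≤ #{w | γ ^ 2 * n / 2 ≤ altCodegree G₁ G₂ u w} := by
    have h' : (n : ℝ) * (γ ^ 2 * n) ≤
        n * (#{w | γ ^ 2 * n / 2 ≤ altCodegree G₁ G₂ u w} + γ ^ 2 * n / 2) := by linarith
    linarith [le_of_mul_le_mul_left h' hn]
  have := card_filter_not_altCodegreeRel_add_le (G₁ := G₁) (G₂ := G₂) (γ ^ 2 * n / 2) u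
  rify at this
  linarith

end Codegree

section AlternatingCycles

variable {α : Type*}

def IsAlternatingCycle (G₁ G₂ : SimpleGraph α) {ℓ : ℕ} (f : Fin ℓ → α) : Prop :=
  Injective f ∧ ∀ i : Fin ℓ, (Even i.val → G₁.Adj (f i) (f (cyc i))) ∧
    (¬ Even i.val → G₂.Adj (f i) (f (cyc i)))

instance [DecidableEq α] (G₁ G₂ : SimpleGraph α) [DecidableRel G₁.Adj]
    [DecidableRel G₂.Adj] {ℓ : ℕ} : DecidablePred (IsAlternatingCycle G₁ G₂ (ℓ := ℓ)) :=
  fun _ => inferInstanceAs (Decidable (_ ∧ _))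

namespace Fin

variable {t : ℕ}

def evenPos (k : Fin t) : Fin (2 * t) := ⟨2 * k, by omega⟩

def oddPos (k : Fin t) : Fin (2 * t) := ⟨2 * k + 1, by omega⟩

lemma evenPos_or_oddPos (i : Fin (2 * t)) : (∃ k, i = evenPos k) ∨ ∃ k, i = oddPos k := by
  rcases Nat.even_or_odd' i.val with ⟨k, hk | hk⟩
  · exact .inl ⟨⟨k, by omega⟩, Fin.ext hk⟩
  · exact .inr ⟨⟨k, by omega⟩, Fin.ext hk⟩

lemma even_evenPos (k : Fin t) : Even (evenPos k).val := even_two_mul _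

lemma not_even_oddPos (k : Fin t) : ¬ Even (oddPos k).val := by
  simp [oddPos]

lemma cyc_evenPos (k : Fin t) : cyc (evenPos k) = oddPos k :=
  Fin.ext (Nat.mod_eq_of_lt (by simp only [evenPos]; omega))

lemma cyc_oddPos (k : Fin t) : cyc (oddPos k) = evenPos (cyc k) :=
  Fin.ext (by simp [cyc, evenPos, oddPos, ← Nat.mul_mod_mul_left]; ring_nf)

end Fin

open Fin

def interleave {t : ℕ} (c v : Fin t → α) (i : Fin (2 * t)) : α :=
  if Even i.val then c ⟨i / 2, by omega⟩ else v ⟨i / 2, by omega⟩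

variable {t : ℕ} {c v : Fin t → α}

@[simp] lemma interleave_evenPos (k : Fin t) : interleave c v (evenPos k) = c k := by
  simp [interleave, evenPos]

@[simp] lemma interleave_oddPos (k : Fin t) : interleave c v (oddPos k) = v k := by
  simp only [interleave, not_even_oddPos, if_false]
  congr 1
  ext
  simp only [oddPos]
  omega

lemma interleave_injective (hc : Injective c) (hv : Injective v) (hcv : ∀ j k, v j ≠ c k) :
    Injective (interleave c v) := by
  intro i i' h
  rcases evenPos_or_oddPos i with ⟨k, rfl⟩ | ⟨k, rfl⟩ <;>
  rcases evenPos_or_oddPos i' with ⟨k', rfl⟩ | ⟨k', rfl⟩ <;>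
  simp only [interleave_evenPos, interleave_oddPos] at h
  · rw [hc h]
  · exact absurd h.symm (hcv _ _)
  · exact absurd h (hcv _ _)
  · rw [hv h]

lemma isAlternatingCycle_interleave {G₁ G₂ : SimpleGraph α} (hc : Injective c) (hv : Injective v)
    (hcv : ∀ j k, v j ≠ c k) (h₁ : ∀ k, G₁.Adj (c k) (v k))
    (h₂ : ∀ k, G₂.Adj (v k) (c (cyc k))) :
    IsAlternatingCycle G₁ G₂ (interleave c v) := by
  refine ⟨interleave_injective hc hv hcv, fun i => ?_⟩
  rcases evenPos_or_oddPos i with ⟨k, rfl⟩ | ⟨k, rfl⟩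
  · simpa [even_evenPos, cyc_evenPos] using h₁ k
  · simpa [not_even_oddPos, cyc_oddPos] using h₂ k

end AlternatingCycles

section Completion

variable {α : Type*} [Fintype α] [DecidableEq α] {G₁ G₂ : SimpleGraph α}
  [DecidableRel G₁.Adj] [DecidableRel G₂.Adj]

lemma card_mul_le_card_isAlternatingCycle {θ : ℝ} {t : ℕ} (htθ : t ≤ θ)
    (C : Finset (Fin t → α)) (hC : ∀ c ∈ C, IsDirCycle (altCodegreeRel G₁ G₂ θ) c) :
    #C * ((θ - t) ^ t - t ^ 2 * Fintype.card α ^ (t - 1)) ≤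
      #{f : Fin (2 * t) → α | IsAlternatingCycle G₁ G₂ f} := by
  set A : (Fin t → α) → Fin t → Finset α := fun c j =>
    (G₁.neighborFinset (c j) ∩ G₂.neighborFinset (c (cyc j))) \ univ.image c
  have hA : ∀ c ∈ C, ∀ j, θ - t ≤ #(A c j) := by
    intro c hc j
    have hθ := ((hC c hc).2 j).2
    have hsd : altCodegree G₁ G₂ (c j) (c (cyc j)) - #(univ.image c) ≤ #(A c j) :=
      le_card_sdiff _ _
    have himg : #(univ.image c) ≤ t := card_image_le.trans (by simp)
    have : altCodegree G₁ G₂ (c j) (c (cyc j)) ≤ #(A c j) + t := by omega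
    rify at this
    linarith
  set S := C.sigma fun c => {v ∈ Fintype.piFinset (A c) | Injective v}
  have hS : (#C : ℝ) * ((θ - t) ^ t - t ^ 2 * Fintype.card α ^ (t - 1)) ≤ #S := by
    rw [card_sigma, Nat.cast_sum, ← nsmul_eq_mul]
    refine card_nsmul_le_sum _ _ _ fun c hc => ?_
    simpa using pow_sub_le_card_filter_injective_piFinset (A c) (by linarith) (hA c hc)
  refine hS.trans (Nat.cast_le.2 (card_le_card_of_injOn (fun p => interleave p.1 p.2) ?_ ?_))
  · rintro ⟨c, v⟩ hp
    simp only [S, coe_sigma, Set.mem_sigma_iff, mem_coe, mem_filter, Fintype.mem_piFinset] at hp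
    obtain ⟨hc, hvA, hv⟩ := hp
    have hvA' : ∀ j, (G₁.Adj (c j) (v j) ∧ G₂.Adj (c (cyc j)) (v j)) ∧ ∀ k, c k ≠ v j :=
      fun j => by simpa [A] using hvA j
    simp only [coe_filter, mem_univ, true_and, Set.mem_ofPred_eq]
    refine isAlternatingCycle_interleave (hC c hc).1 hv (fun j k h => (hvA' j).2 k h.symm)
      (fun k => (hvA' k).1.1) (fun k => ((hvA' k).1.2).symm)
  · rintro ⟨c, v⟩ - ⟨c', v'⟩ - h
    have hc : c = c' := funext fun k => by simpa using congrFun h (Fin.evenPos k)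
    subst hc
    have hv : v = v' := funext fun k => by simpa using congrFun h (Fin.oddPos k)
    rw [hv]

end Completion

section Assembly

variable {α : Type*} [Fintype α] [DecidableEq α] {G₁ G₂ : SimpleGraph α}
  [DecidableRel G₁.Adj] [DecidableRel G₂.Adj]

lemma exists_pow_le_card_isDirCycle_altCodegreeRel {γ : ℝ} (hγ : 0 ≤ γ)
    (h₁ : ∀ v, γ * Fintype.card α ≤ G₁.degree v) (h₂ : ∀ v, γ * Fintype.card α ≤ G₂.degree v)
    {s : ℕ} (hs : 2 ≤ s) (hsγ : s * (1 - γ ^ 2 / 4) ^ (s - 1) ≤ 1 / 2)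
    (hn : 1 ≤ γ ^ 2 / 4 * Fintype.card α) :
    ∃ t, 2 ≤ t ∧ t ≤ s ∧ Fintype.card α ^ t ≤ 2 * s ^ (t + 1) *
      #{F : Fin t → α | IsDirCycle (altCodegreeRel G₁ G₂ (γ ^ 2 * Fintype.card α / 2)) F} := by
  set n := Fintype.card α
  have hnon : ∀ u, (#{w | ¬ altCodegreeRel G₁ G₂ (γ ^ 2 * n / 2) u w} : ℝ) ≤
      (1 - γ ^ 2 / 4) * n := fun u => by
    linarith [card_filter_not_altCodegreeRel_le hγ h₁ h₂ u]
  have hgood := pow_le_two_mul_card_forall_exists (ι := Fin s) hnon (by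
    rw [Fintype.card_fin]
    calc (s : ℝ) * (n * ((1 - γ ^ 2 / 4) * n) ^ (s - 1)) =
          s * (1 - γ ^ 2 / 4) ^ (s - 1) * (n : ℝ) ^ (s - 1 + 1) := by
          rw [mul_pow, pow_succ]
          ring
      _ ≤ 1 / 2 * (n : ℝ) ^ s := by
          rw [Nat.sub_add_cancel (by omega)]
          exact mul_le_mul_of_nonneg_right hsγ (by positivity)
      _ = _ := by ring)
  simpa using exists_pow_le_card_isDirCycle (fun u h => h.1 rfl) (by simpa using hs) hgood

lemma pow_div_two_le_sub_pow_sub_mul_pow {β x : ℝ} {s t : ℕ} (hβ0 : 0 < β) (hβ1 : β ≤ 1)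
    (ht : 1 ≤ t) (hts : t ≤ s) (hx : 2 * s ^ 2 ≤ β ^ s * x) :
    (β * x) ^ t / 2 ≤ (2 * β * x - t) ^ t - t ^ 2 * x ^ (t - 1) := by
  have hx0 : 0 ≤ x := nonneg_of_mul_nonneg_right (hx.trans' (by positivity)) (by positivity)
  have hβt : 2 * (t : ℝ) ^ 2 ≤ β ^ t * x :=
    calc 2 * (t : ℝ) ^ 2 ≤ 2 * s ^ 2 := by gcongr
      _ ≤ β ^ s * x := hx
      _ ≤ β ^ t * x := mul_le_mul_of_nonneg_right (pow_le_pow_of_le_one hβ0.le hβ1 hts) hx0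
  have hfar : (β * x) ^ t ≤ (2 * β * x - t) ^ t := by
    refine pow_le_pow_left₀ (by positivity) ?_ t
    have hβx : β ^ t * x ≤ β * x :=
      mul_le_mul_of_nonneg_right (pow_le_of_le_one hβ0.le hβ1 (by omega)) hx0
    have ht1 : (1 : ℝ) ≤ t := by exact_mod_cast ht
    nlinarith
  have hsmall : 2 * (t : ℝ) ^ 2 * x ^ (t - 1) ≤ (β * x) ^ t :=
    calc 2 * (t : ℝ) ^ 2 * x ^ (t - 1) ≤ β ^ t * x * x ^ (t - 1) :=
          mul_le_mul_of_nonneg_right hβt (by positivity)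
      _ = (β * x) ^ t := by rw [mul_pow, ← pow_sub_one_mul (by omega : t ≠ 0) x]; ring
  linarith

lemma exists_le_card_isAlternatingCycle {γ : ℝ} (hγ0 : 0 < γ) (hγ1 : γ ≤ 1)
    (h₁ : ∀ v, γ * Fintype.card α ≤ G₁.degree v) (h₂ : ∀ v, γ * Fintype.card α ≤ G₂.degree v)
    {s : ℕ} (hs : 2 ≤ s) (hsγ : s * (1 - γ ^ 2 / 4) ^ (s - 1) ≤ 1 / 2)
    (hn : 2 * s ^ 2 ≤ (γ ^ 2 / 4) ^ s * Fintype.card α) :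
    ∃ t, 2 ≤ t ∧ t ≤ s ∧
      (γ ^ 2 / 4) ^ s / (4 * s ^ (s + 1)) * Fintype.card α ^ (2 * t) ≤
        #{f : Fin (2 * t) → α | IsAlternatingCycle G₁ G₂ f} := by
  set n := Fintype.card α
  set β := γ ^ 2 / 4
  have hβ0 : 0 < β := by positivity
  have hβ1 : β ≤ 1 := by
    have : γ ^ 2 ≤ 1 := pow_le_one₀ hγ0.le hγ1
    simp only [β]
    linarith
  have hβn : 2 * (s : ℝ) ^ 2 ≤ β * n :=
    hn.trans (mul_le_mul_of_nonneg_right (pow_le_of_le_one hβ0.le hβ1 (by omega)) (by positivity))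
  have hs1 : (1 : ℝ) ≤ s := by exact_mod_cast (by omega : 1 ≤ s)
  have hβn1 : 1 ≤ β * n := by nlinarith
  obtain ⟨t, ht2, hts, hcyc⟩ :=
    exists_pow_le_card_isDirCycle_altCodegreeRel hγ0.le h₁ h₂ hs hsγ hβn1
  rw [show γ ^ 2 * n / 2 = 2 * β * n by ring] at hcyc
  set C : Finset (Fin t → α) := {F | IsDirCycle (altCodegreeRel G₁ G₂ (2 * β * n)) F}
  have hC : (n : ℝ) ^ t / (2 * s ^ (t + 1)) ≤ #C := by
    rw [div_le_iff₀ (by positivity), mul_comm]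
    exact_mod_cast hcyc
  have hts' : (t : ℝ) ≤ s := by exact_mod_cast hts
  refine ⟨t, ht2, hts, le_trans ?_ (card_mul_le_card_isAlternatingCycle (by nlinarith) C
    fun c hc => (mem_filter.1 hc).2)⟩
  calc β ^ s / (4 * s ^ (s + 1)) * n ^ (2 * t) ≤ β ^ t / (4 * s ^ (t + 1)) * n ^ (2 * t) := by
        refine mul_le_mul_of_nonneg_right (div_le_div₀ (by positivity)
          (pow_le_pow_of_le_one hβ0.le hβ1 hts) (by positivity) ?_) (by positivity)
        gcongr
    _ = (n : ℝ) ^ t / (2 * s ^ (t + 1)) * ((β * n) ^ t / 2) := by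
        rw [mul_pow, two_mul, pow_add]
        field_simp
        ring
    _ ≤ #C * ((2 * β * n - t) ^ t - t ^ 2 * n ^ (t - 1)) :=
        mul_le_mul hC (pow_div_two_le_sub_pow_sub_mul_pow hβ0 hβ1 (by omega) hts hn)
          (by positivity) (by positivity)

end Assembly

open Filter Topology in
lemma tendsto_mul_pow_sub_one_atTop_nhds_zero {r : ℝ} (h0 : 0 ≤ r) (h1 : r < 1) :
    Tendsto (fun s : ℕ => (s : ℝ) * r ^ (s - 1)) atTop (𝓝 0) := by
  rw [← tendsto_add_atTop_iff_nat 1]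
  have := (tendsto_self_mul_const_pow_of_lt_one h0 h1).add
    (tendsto_pow_atTop_nhds_zero_of_lt_one h0 h1)
  rw [add_zero] at this
  refine this.congr fun k => ?_
  push_cast
  ring

lemma SimpleGraph.ncard_setOf_adj {V : Type*} [Fintype V] (G : SimpleGraph V) [DecidableRel G.Adj]
    (v : V) : {u | G.Adj v u}.ncard = G.degree v := by
  rw [← G.card_neighborFinset_eq_degree, ← Set.ncard_coe_finset, G.coe_neighborFinset]
  rfl

/-- For every `γ ∈ (0,1)` there are `c > 0`, `L` and `K` such that every
2-edge-coloured graph (red graph `G₁`, blue graph `G₂`) on `n ≥ K` vertices with red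
and blue minimum degree at least `γn` contains at least `c·n^ℓ` copies of a
colour-alternating cycle of some fixed even length `4 ≤ ℓ ≤ L`.  Copies are counted
as injective maps `f : Fin ℓ → V` whose edges alternate red (at even positions) and
blue (at odd positions). -/
theorem stmt_2 (γ : ℝ) (hγ0 : 0 < γ) (hγ1 : γ < 1) :
    ∃ c : ℝ, 0 < c ∧ ∃ L K : ℕ,
      ∀ n : ℕ, K ≤ n → ∀ G₁ G₂ : SimpleGraph (Fin n),
        (∀ v, γ * n ≤ ({u | G₁.Adj v u}.ncard : ℝ)) →
        (∀ v, γ * n ≤ ({u | G₂.Adj v u}.ncard : ℝ)) →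
        ∃ ℓ : ℕ, 4 ≤ ℓ ∧ ℓ ≤ L ∧ Even ℓ ∧
          c * (n : ℝ) ^ ℓ ≤
            ({f : Fin ℓ → Fin n | Function.Injective f ∧
              ∀ i : Fin ℓ, (Even i.val → G₁.Adj (f i) (f (cyc i))) ∧
                (¬ Even i.val → G₂.Adj (f i) (f (cyc i)))}.ncard : ℝ) := by
  classical
  have hγ2 : γ ^ 2 < 1 := pow_lt_one₀ hγ0.le hγ1 two_ne_zero
  have hlim := tendsto_mul_pow_sub_one_atTop_nhds_zero (r := 1 - γ ^ 2 / 4) (by linarith)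
    (by linarith [pow_pos hγ0 2])
  obtain ⟨s, hsγ, hs⟩ := ((hlim.eventually (ge_mem_nhds (by norm_num : (0 : ℝ) < 1 / 2))).and
    (Filter.eventually_ge_atTop 2)).exists
  refine ⟨(γ ^ 2 / 4) ^ s / (4 * s ^ (s + 1)), by positivity, 2 * s,
    ⌈2 * s ^ 2 / (γ ^ 2 / 4) ^ s⌉₊, fun n hn G₁ G₂ h₁ h₂ => ?_⟩
  have hn' : 2 * (s : ℝ) ^ 2 ≤ (γ ^ 2 / 4) ^ s * n := by
    rw [← div_le_iff₀' (by positivity)]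
    exact (Nat.le_ceil _).trans (by exact_mod_cast hn)
  obtain ⟨t, ht2, hts, hcount⟩ := exists_le_card_isAlternatingCycle (G₁ := G₁) (G₂ := G₂)
    hγ0 hγ1.le (fun v => by simpa [SimpleGraph.ncard_setOf_adj] using h₁ v)
    (fun v => by simpa [SimpleGraph.ncard_setOf_adj] using h₂ v) hs hsγ (by simpa using hn')
  refine ⟨2 * t, by omega, by omega, even_two_mul t, ?_⟩
  have hncard : {f : Fin (2 * t) → Fin n | IsAlternatingCycle G₁ G₂ f}.ncard =
      #{f : Fin (2 * t) → Fin n | IsAlternatingCycle G₁ G₂ f} := by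
    rw [← coe_filter_univ, Set.ncard_coe_finset]
  change _ ≤ (({f : Fin (2 * t) → Fin n | IsAlternatingCycle G₁ G₂ f}.ncard : ℕ) : ℝ)
  rw [hncard]
  simpa using hcount
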